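/- arXiv:0912.2368 — 6 statements merged into one kernel-verified Lean document; each statement's English description precedes it below -/
import Mathlib

section
/- For every integer n ≥ 3 there exists a nontrivial element w of the free group F_2 on two generators with word length |w| ≤ 4n³ + 4n² such that for every finite group H with |H| ≤ n²/9 and every group homomorphism φ : F_2 → H one has φ(w) = 1. (Consequently F_{F_k}(n) ≽ n^{2/3}.) -/
/-!
Let `s = ⌈n/3⌉`, so that `|H| ≤ s²`, and put `x = φ a`, `y = φ b`. Either `y ^ d = 1` for some
`d ≤ s`, or `⟨y⟩` has index `< s`, and then some `x ^ e` with `0 < e < s` lies in `⟨y⟩` and commutes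
with `y`. So one of the `2s - 1` commutators `⁅a, b ^ d⁆`, `⁅a ^ e, b⁆` is killed by `φ`. A balanced
iterated commutator of depth `⌈log₂ (2s - 1)⌉` with these leaves is killed as soon as one leaf is;
its length is `O(s³)`, and it is nontrivial because its reduced word is the concatenation of the
pieces: it begins with `a` and ends with `b⁻¹`.
-/

open scoped commutatorElement

namespace FreeGroup

variable {α : Type*} [DecidableEq α]

def HasEndLetters (p q : α × Bool) (w : FreeGroup α) : Prop :=
  w.toWord.head? = some p ∧ w.toWord.getLast? = some q

namespace HasEndLetters

variable {p q p' q' : α × Bool} {x y : FreeGroup α}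

theorem ne_one (h : HasEndLetters p q x) : x ≠ 1 := by
  rintro rfl
  simp [HasEndLetters] at h

theorem toWord_ne_nil (h : HasEndLetters p q x) : x.toWord ≠ [] :=
  mt toWord_eq_nil_iff.1 h.ne_one

theorem mul (hx : HasEndLetters p q x) (hy : HasEndLetters p' q' y)
    (hqp : q.1 = p'.1 → q.2 = p'.2) : HasEndLetters p q' (x * y) := by
  have hred : IsReduced (x.toWord ++ y.toWord) :=
    List.isChain_append.2 ⟨isReduced_toWord, isReduced_toWord, by rw [hx.2, hy.1]; simpa using hqp⟩
  rw [HasEndLetters, toWord_mul, hred.reduce_eq, List.head?_append_of_ne_nil _ hx.toWord_ne_nil,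
    List.getLast?_append_of_ne_nil _ hy.toWord_ne_nil]
  exact ⟨hx.1, hy.2⟩

theorem inv (h : HasEndLetters p q x) : HasEndLetters (q.1, !q.2) (p.1, !p.2) x⁻¹ := by
  simp [HasEndLetters, toWord_inv, invRev, h.1, h.2]

end HasEndLetters

theorem hasEndLetters_of_pow (a : α) {n : ℕ} (hn : n ≠ 0) :
    HasEndLetters (a, true) (a, true) (of a ^ n) := by
  simp [HasEndLetters, toWord_of_pow, List.head?_replicate, List.getLast?_replicate, hn]

theorem hasEndLetters_commutatorElement_pow {a b : α} (hab : a ≠ b) {m n : ℕ} (hm : m ≠ 0)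
    (hn : n ≠ 0) : HasEndLetters (a, true) (b, false) ⁅of a ^ m, of b ^ n⁆ := by
  have ha := hasEndLetters_of_pow a hm
  have hb := hasEndLetters_of_pow b hn
  rw [commutatorElement_def]
  exact ((ha.mul hb (by simp [hab])).mul ha.inv (by simp [hab.symm])).mul hb.inv (by simp [hab])

theorem norm_commutatorElement_le (x y : FreeGroup α) :
    norm ⁅x, y⁆ ≤ 2 * norm x + 2 * norm y := by
  rw [commutatorElement_def]
  have := norm_mul_le (x * y * x⁻¹) y⁻¹
  have := norm_mul_le (x * y) x⁻¹
  have := norm_mul_le x y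
  simp only [norm_inv_eq] at *
  omega

end FreeGroup

section CommutatorTree

variable {G : Type*} [Group G]

/-- The leaves are `f 0, …, f (2 ^ k - 1)`. The conjugations by `a` and `b` keep the word of the
tree reduced when those of the leaves are. -/
def commutatorTree (a b : G) : ℕ → (ℕ → G) → G
  | 0, f => f 0
  | k + 1, f => ⁅a * commutatorTree a b k f * a⁻¹, b * commutatorTree a b k (f <| 2 ^ k + ·) * b⁻¹⁆

theorem map_commutatorTree {H : Type*} [Group H] (φ : G →* H) (a b : G) (k : ℕ) (f : ℕ → G) :
    φ (commutatorTree a b k f) = commutatorTree (φ a) (φ b) k (φ ∘ f) := by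
  induction k generalizing f with
  | zero => rfl
  | succ k ih => simp only [commutatorTree, map_commutatorElement, map_mul, map_inv, ih]; rfl

theorem commutatorTree_eq_one {a b : G} {k : ℕ} {f : ℕ → G} {j : ℕ} (hj : j < 2 ^ k)
    (hf : f j = 1) : commutatorTree a b k f = 1 := by
  induction k generalizing f j with
  | zero => rw [Nat.lt_one_iff.1 hj] at hf; exact hf
  | succ k ih =>
    rw [commutatorTree]
    rcases lt_or_ge j (2 ^ k) with hjk | hjk
    · simp [ih hjk hf]
    · have hj' : j - 2 ^ k < 2 ^ k := by rw [pow_succ] at hj; omega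
      simp [ih (f := (f <| 2 ^ k + ·)) hj' (by rwa [Nat.add_sub_cancel' hjk])]

end CommutatorTree

namespace FreeGroup

variable {α : Type*} [DecidableEq α] {a b : α} {f : ℕ → FreeGroup α}

theorem norm_of_mul_mul_inv_le (c : α) (x : FreeGroup α) :
    norm (of c * x * (of c)⁻¹) ≤ norm x + 2 := by
  have := norm_mul_le (of c * x) (of c)⁻¹
  have := norm_mul_le (of c) x
  simp only [norm_inv_eq, norm_of] at *
  omega

theorem hasEndLetters_commutatorTree (hab : a ≠ b) (k : ℕ)
    (hf : ∀ j, HasEndLetters (a, true) (b, false) (f j)) :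
    HasEndLetters (a, true) (b, false) (commutatorTree (of a) (of b) k f) := by
  induction k generalizing f with
  | zero => exact hf 0
  | succ k ih =>
    have ha := hasEndLetters_of_pow a one_ne_zero
    have hb := hasEndLetters_of_pow b one_ne_zero
    simp only [pow_one] at ha hb
    have hX := (ha.mul (ih hf) (by simp)).mul ha.inv (by simp)
    have hY := (hb.mul (ih fun j => hf (2 ^ k + j)) (by simp [hab.symm])).mul hb.inv (by simp)
    rw [commutatorTree, commutatorElement_def]
    exact ((hX.mul hY (by simp [hab])).mul hX.inv (by simp [hab.symm])).mul hY.inv (by simp [hab])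

theorem norm_commutatorTree_le {B : ℕ} (k : ℕ) (hf : ∀ j, norm (f j) ≤ B) :
    3 * norm (commutatorTree (of a) (of b) k f) + 8 ≤ 4 ^ k * (3 * B + 8) := by
  induction k generalizing f with
  | zero => simpa [commutatorTree] using hf 0
  | succ k ih =>
    have hX := ih hf
    have hY := ih fun j => hf (2 ^ k + j)
    have := norm_commutatorElement_le (of a * commutatorTree (of a) (of b) k f * (of a)⁻¹)
      (of b * commutatorTree (of a) (of b) k (f <| 2 ^ k + ·) * (of b)⁻¹)
    have := norm_of_mul_mul_inv_le a (commutatorTree (of a) (of b) k f)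
    have := norm_of_mul_mul_inv_le b (commutatorTree (of a) (of b) k (f <| 2 ^ k + ·))
    rw [commutatorTree, pow_succ]
    nlinarith

end FreeGroup

theorem exists_pow_eq_one_or_exists_commute_pow {H : Type*} [Group H] [Finite H] {s : ℕ}
    (hcard : Nat.card H ≤ s ^ 2) (x y : H) :
    (∃ d, 0 < d ∧ d ≤ s ∧ y ^ d = 1) ∨ ∃ e, 0 < e ∧ e < s ∧ Commute (x ^ e) y := by
  by_cases hy : orderOf y ≤ s
  · exact .inl ⟨orderOf y, orderOf_pos y, hy, pow_orderOf_eq_one y⟩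
  right
  set K := Subgroup.zpowers y
  have hindex : K.index < s := by
    have := K.index_mul_card
    rw [Nat.card_zpowers] at this
    by_contra! h
    nlinarith [Nat.card_pos (α := H), Nat.mul_le_mul_right (orderOf y) h]
  obtain ⟨e, he, hle, hmem⟩ := K.exists_pow_mem_of_index_ne_zero K.index_ne_zero_of_finite x
  obtain ⟨m, hm⟩ := Subgroup.mem_zpowers_iff.1 hmem
  exact ⟨e, he, hle.trans_lt hindex, hm ▸ (Commute.refl y).zpow_left m⟩

theorem Nat.pow_clog_lt_mul {b m : ℕ} (hb : 1 < b) (hm : 1 ≤ m) : b ^ Nat.clog b m < b * m := by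
  rcases hm.eq_or_lt with rfl | hm
  · simpa using hb
  have hlt := Nat.pow_pred_clog_lt_self hb hm
  rw [← Nat.succ_pred_eq_of_pos (Nat.clog_pos hb hm), pow_succ, mul_comm]
  exact Nat.mul_lt_mul_of_pos_left hlt (by omega)

open FreeGroup

def commutatorLeaf (s j : ℕ) : FreeGroup (Fin 2) :=
  if j < s then ⁅of (0 : Fin 2), of (1 : Fin 2) ^ (j + 1)⁆
  else if j < 2 * s - 1 then ⁅of (0 : Fin 2) ^ (j + 1 - s), of (1 : Fin 2)⁆
  else ⁅of (0 : Fin 2), of (1 : Fin 2)⁆ -- padding up to a power of two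

theorem hasEndLetters_commutatorLeaf (s j : ℕ) :
    HasEndLetters (0, true) (1, false) (commutatorLeaf s j) := by
  have h := @hasEndLetters_commutatorElement_pow (Fin 2) _ 0 1 (by decide)
  unfold commutatorLeaf
  split_ifs
  · simpa using h one_ne_zero (Nat.succ_ne_zero j)
  · simpa using h (m := j + 1 - s) (by omega) one_ne_zero
  · simpa using h one_ne_zero one_ne_zero

theorem norm_commutatorLeaf_le {s : ℕ} (hs : 1 ≤ s) (j : ℕ) :
    norm (commutatorLeaf s j) ≤ 2 * s + 2 := by
  have h (m n : ℕ) : norm ⁅of (0 : Fin 2) ^ m, of (1 : Fin 2) ^ n⁆ ≤ 2 * m + 2 * n := by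
    simpa [norm_of_pow] using norm_commutatorElement_le (of (0 : Fin 2) ^ m) (of (1 : Fin 2) ^ n)
  unfold commutatorLeaf
  split_ifs
  · have := h 1 (j + 1); rw [pow_one] at this; omega
  · have := h (j + 1 - s) 1; rw [pow_one] at this; omega
  · have := h 1 1; simp only [pow_one] at this; omega

theorem exists_map_commutatorLeaf_eq_one {H : Type*} [Group H] [Finite H] {s : ℕ}
    (hcard : Nat.card H ≤ s ^ 2) (φ : FreeGroup (Fin 2) →* H) :
    ∃ j < 2 * s - 1, φ (commutatorLeaf s j) = 1 := by
  rcases exists_pow_eq_one_or_exists_commute_pow hcard (φ (of 0)) (φ (of 1)) with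
    ⟨d, hd, hds, hyd⟩ | ⟨e, he, hes, hcomm⟩
  · refine ⟨d - 1, by omega, ?_⟩
    rw [commutatorLeaf, if_pos (by omega), Nat.sub_add_cancel hd, map_commutatorElement, map_pow,
      hyd, commutatorElement_one_right]
  · refine ⟨s + e - 1, by omega, ?_⟩
    rw [commutatorLeaf, if_neg (by omega), if_pos (by omega), show s + e - 1 + 1 - s = e by omega,
      map_commutatorElement, map_pow, commutatorElement_eq_one_iff_commute]
    exact hcomm

def smallGroupLaw (s : ℕ) : FreeGroup (Fin 2) :=
  commutatorTree (of 0) (of 1) (Nat.clog 2 (2 * s - 1)) (commutatorLeaf s)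

theorem smallGroupLaw_ne_one (s : ℕ) : smallGroupLaw s ≠ 1 :=
  (hasEndLetters_commutatorTree (by decide) _ (hasEndLetters_commutatorLeaf s)).ne_one

theorem map_smallGroupLaw_eq_one {H : Type*} [Group H] [Finite H] {s : ℕ}
    (hcard : Nat.card H ≤ s ^ 2) (φ : FreeGroup (Fin 2) →* H) : φ (smallGroupLaw s) = 1 := by
  obtain ⟨j, hj, hφj⟩ := exists_map_commutatorLeaf_eq_one hcard φ
  rw [smallGroupLaw, map_commutatorTree]
  exact commutatorTree_eq_one (hj.trans_le (Nat.le_pow_clog one_lt_two _)) hφj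

theorem norm_smallGroupLaw_le {s : ℕ} (hs : 1 ≤ s) :
    3 * norm (smallGroupLaw s) + 8 ≤ (4 * s - 3) ^ 2 * (6 * s + 14) := by
  have hN := Nat.pow_clog_lt_mul one_lt_two (show 1 ≤ 2 * s - 1 by omega)
  set k := Nat.clog 2 (2 * s - 1)
  have h := norm_commutatorTree_le (a := (0 : Fin 2)) (b := 1) k (norm_commutatorLeaf_le hs)
  rw [show (4 : ℕ) ^ k = (2 ^ k) ^ 2 by rw [← pow_mul, mul_comm, pow_mul]; rfl] at h
  exact h.trans (Nat.mul_le_mul (Nat.pow_le_pow_left (by omega) 2) (by omega))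

/-- For every integer `n ≥ 3` there exists a nontrivial element `w` of the free group
on two generators, of word length at most `4n³ + 4n²`, such that every homomorphism
from the free group to a finite group of order at most `n²/9` kills `w`. -/
theorem stmt_0 (n : ℕ) (hn : 3 ≤ n) :
    ∃ w : FreeGroup (Fin 2), w ≠ 1 ∧
      (FreeGroup.toWord w).length ≤ 4 * n ^ 3 + 4 * n ^ 2 ∧
      ∀ (H : Type) (_ : Group H) (_ : Finite H),
        (Nat.card H : ℝ) ≤ (n : ℝ) ^ 2 / 9 →
        ∀ φ : FreeGroup (Fin 2) →* H, φ w = 1 := by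
  set s := (n + 2) / 3
  have hs : n ≤ 3 * s ∧ 3 * s ≤ n + 2 := by omega
  refine ⟨smallGroupLaw s, smallGroupLaw_ne_one s, ?_, fun H _ _ hcard φ => ?_⟩
  · have h := norm_smallGroupLaw_le (s := s) (by omega)
    have ht : 3 * (4 * s - 3) ≤ 4 * n := by omega
    have ht2 := Nat.mul_le_mul ht ht
    change FreeGroup.norm _ ≤ _
    nlinarith
  · refine map_smallGroupLaw_eq_one ?_ φ
    have : 9 * Nat.card H ≤ n ^ 2 := by exact_mod_cast (by linarith : (9 : ℝ) * Nat.card H ≤ n ^ 2)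
    nlinarith
end

section
/- There exists a constant C > 0 (depending only on k) such that for every integer n ≥ 2 and every nonzero element v ∈ ℤ^k with Σ_{i=1}^{k} |v_i| ≤ n, there exists a finite group H with |H| ≤ C·log n and a group homomorphism φ : ℤ^k → H with φ(v) ≠ 1. (This is the upper bound F_{ℤ^k}(n) ≼ log n.) -/
/-!
Detect `v` through a single coordinate `a = vᵢ ≠ 0` and the quotient `ℤ → ℤ/dℤ`, where `d`
is a small positive integer not dividing `a`. Such a `d` of size `O(log |a|)` exists: if every
`j ≤ 2m` divided `a`, then so would the central binomial coefficient `C(2m, m)`, all of whose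
prime-power factors are at most `2m`, and `2^m ≤ C(2m, m)` forces `2^m ≤ |a|`.
-/

namespace Nat

theorem two_pow_le_centralBinom (m : ℕ) : 2 ^ m ≤ centralBinom m := by
  induction m with
  | zero => simp
  | succ m ih =>
    have key : (m + 1) * (2 * 2 ^ m) ≤ (m + 1) * centralBinom (m + 1) := by
      rw [succ_mul_centralBinom_succ]
      calc (m + 1) * (2 * 2 ^ m) = 2 * (m + 1) * 2 ^ m := by ring
        _ ≤ 2 * (2 * m + 1) * centralBinom m := by gcongr; omega
    rw [pow_succ, mul_comm _ 2]
    exact Nat.le_of_mul_le_mul_left key m.succ_pos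

theorem centralBinom_dvd_of_forall_dvd {a m : ℕ} (ha : a ≠ 0)
    (h : ∀ j, 0 < j → j ≤ 2 * m → j ∣ a) : centralBinom m ∣ a := by
  rcases m.eq_zero_or_pos with rfl | hm
  · simp
  rw [← factorization_le_iff_dvd (centralBinom_ne_zero m) ha]
  intro p
  by_cases hp : p.Prime
  · refine (hp.pow_dvd_iff_le_factorization ha).mp (h _ (Nat.pow_pos hp.pos) ?_)
    rw [centralBinom_eq_two_mul_choose]
    exact pow_factorization_choose_le (by omega)
  · simp [factorization_eq_zero_of_not_prime _ hp]

theorem two_pow_le_of_forall_dvd {a m : ℕ} (ha : a ≠ 0)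
    (h : ∀ j, 0 < j → j ≤ 2 * m → j ∣ a) : 2 ^ m ≤ a :=
  (two_pow_le_centralBinom m).trans <|
    le_of_dvd (pos_of_ne_zero ha) (centralBinom_dvd_of_forall_dvd ha h)

theorem exists_not_dvd_le_two_mul_log {a : ℕ} (ha : a ≠ 0) :
    ∃ d, 0 < d ∧ d ≤ 2 * log 2 a + 2 ∧ ¬ d ∣ a := by
  by_contra! h
  have := two_pow_le_of_forall_dvd ha (m := log 2 a + 1) fun j hj hja => h j hj (by omega)
  exact (lt_pow_succ_log_self one_lt_two a).not_ge this

theorem exists_not_dvd_le_mul_log {a n : ℕ} (ha : a ≠ 0) (han : a ≤ n) (hn : 2 ≤ n) :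
    ∃ d : ℕ, 0 < d ∧ (d : ℝ) ≤ 4 / Real.log 2 * Real.log n ∧ ¬ d ∣ a := by
  obtain ⟨d, hd, hda, hdvd⟩ := exists_not_dvd_le_two_mul_log ha
  refine ⟨d, hd, ?_, hdvd⟩
  have hlog : 1 ≤ log 2 n := log_pos one_lt_two hn
  have hd' : d ≤ 4 * log 2 n := by
    have := log_mono_right (b := 2) han
    omega
  calc (d : ℝ) ≤ 4 * (log 2 n : ℝ) := by exact_mod_cast hd'
    _ ≤ 4 * Real.logb 2 n := by
      gcongr
      exact_mod_cast Real.natLog_le_logb n 2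
    _ = 4 / Real.log 2 * Real.log n := by rw [Real.logb]; ring

end Nat

/-- There is a constant `C > 0`, depending only on `k`, such that every nonzero
`v ∈ ℤᵏ` with `∑ |vᵢ| ≤ n` (where `n ≥ 2`) is detected by a homomorphism to a finite
group of order at most `C·log n`.  (The upper bound `F_{ℤᵏ}(n) ≼ log n`.) -/
theorem stmt_7 (k : ℕ) :
    ∃ C : ℝ, 0 < C ∧
      ∀ n : ℕ, 2 ≤ n → ∀ v : Fin k → ℤ, v ≠ 0 → (∑ i, |v i|) ≤ (n : ℤ) →
        ∃ (H : Type) (_ : AddGroup H) (_ : Finite H),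
          (Nat.card H : ℝ) ≤ C * Real.log n ∧
          ∃ φ : (Fin k → ℤ) →+ H, φ v ≠ 0 := by
  refine ⟨4 / Real.log 2, div_pos four_pos (Real.log_pos one_lt_two), fun n hn v hv hsum => ?_⟩
  obtain ⟨i, hi⟩ : ∃ i, v i ≠ 0 := Function.ne_iff.mp hv
  have hvi : (v i).natAbs ≤ n := by
    have := (Finset.single_le_sum (fun j _ => abs_nonneg (v j)) (Finset.mem_univ i)).trans hsum
    rw [Int.abs_eq_natAbs] at this
    exact_mod_cast this
  obtain ⟨d, hd, hdn, hdvd⟩ := Nat.exists_not_dvd_le_mul_log (Int.natAbs_ne_zero.mpr hi) hvi hn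
  have : NeZero d := ⟨hd.ne'⟩
  refine ⟨ZMod d, inferInstance, inferInstance, by rwa [Nat.card_zmod],
    (Int.castAddHom (ZMod d)).comp (Pi.evalAddMonoidHom _ i), ?_⟩
  simpa [ZMod.intCast_zmod_eq_zero_iff_dvd, Int.natCast_dvd] using hdvd
end

section
/- For every positive integer m, let N = lcm(1, 2, …, m) and let v = N·e_1 ∈ ℤ^k (where e_1 is the first standard basis vector). Then v ≠ 0, the ℓ¹-norm of v satisfies Σ|v_i| = N ≤ 4^m, and for every finite group H with |H| ≤ m and every group homomorphism φ : ℤ^k → H one has φ(v) = 1. (This gives the lower bound F_{ℤ^k}(n) ≽ log n.) -/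
/-!
The vector `N • e₁` is killed by a homomorphism into `H` because `|H|` divides
`N = lcm(1, …, m)`. For the bound `N ≤ 4 ^ m`, write `m = n + k` with `n, k` about `m / 2`:
a prime power `p ^ a ≤ m` that exceeds `max n k` forces a carry in the base-`p` addition
`n + k`, so `p ∣ choose m k` (Kummer). Hence `lcm(1, …, m)` divides
`lcm(1, …, max n k) * choose m k`, and induction together with `choose m k ≤ 4 ^ min n k`
gives the bound.
-/

namespace Nat

theorem log_add_le_log_max_add_one {b : ℕ} (hb : 2 ≤ b) (n k : ℕ) :
    log b (n + k) ≤ log b (max n k) + 1 := by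
  have hmax : max n k < b ^ (log b (max n k) + 1) := lt_pow_succ_log_self hb _
  refine Nat.le_of_lt_succ (log_lt_of_lt_pow' (by omega) ?_)
  calc n + k < 2 * b ^ (log b (max n k) + 1) := by omega
    _ ≤ b * b ^ (log b (max n k) + 1) := Nat.mul_le_mul_right _ hb
    _ = b ^ (log b (max n k) + 1 + 1) := (Nat.pow_succ' ..).symm

theorem Prime.one_le_factorization_choose_add {p n k a : ℕ} (hp : p.Prime)
    (hn : n < p ^ a) (hk : k < p ^ a) (hnk : p ^ a ≤ n + k) :
    1 ≤ ((n + k).choose k).factorization p := by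
  have ha : a ≠ 0 := by
    rintro rfl
    rw [pow_zero] at hn hk hnk
    omega
  have hlog : log p (n + k) < a + 1 := by
    have : log p (max n k) < a := log_lt_of_lt_pow' ha (max_lt hn hk)
    have := log_add_le_log_max_add_one hp.two_le n k
    omega
  rw [factorization_choose' hp hlog, Nat.one_le_iff_ne_zero, ← Nat.pos_iff_ne_zero,
    Finset.card_pos]
  exact ⟨a, by simp [Nat.mod_eq_of_lt hn, Nat.mod_eq_of_lt hk]; omega⟩

theorem Prime.log_add_le_log_max_add_factorization_choose {p : ℕ} (hp : p.Prime) (n k : ℕ) :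
    log p (n + k) ≤ log p (max n k) + ((n + k).choose k).factorization p := by
  by_cases hle : log p (n + k) ≤ log p (max n k)
  · omega
  have hmax : max n k < p ^ log p (n + k) := lt_pow_of_log_lt hp.one_lt (by omega)
  have hpow : p ^ log p (n + k) ≤ n + k := pow_log_le_self p (by rintro h; simp [h] at hle)
  have := hp.one_le_factorization_choose_add (lt_of_le_of_lt (le_max_left n k) hmax)
    (lt_of_le_of_lt (le_max_right n k) hmax) hpow
  have := log_add_le_log_max_add_one hp.two_le n k
  omega

theorem lcmUpto_add_dvd (n k : ℕ) :
    lcmUpto (n + k) ∣ lcmUpto (max n k) * (n + k).choose k := by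
  have hchoose : (n + k).choose k ≠ 0 := (choose_pos (le_add_left k n)).ne'
  rw [← factorization_prime_le_iff_dvd (lcmUpto_ne_zero _)
    (mul_ne_zero (lcmUpto_ne_zero _) hchoose)]
  intro p hp
  rw [Nat.factorization_mul (lcmUpto_ne_zero _) hchoose, Finsupp.add_apply,
    factorization_lcmUpto _ hp, factorization_lcmUpto _ hp]
  exact hp.log_add_le_log_max_add_factorization_choose n k

theorem lcmUpto_add_le (n k : ℕ) :
    lcmUpto (n + k) ≤ lcmUpto (max n k) * (n + k).choose k :=
  Nat.le_of_dvd (Nat.mul_pos (lcmUpto_pos _) (choose_pos (le_add_left k n)))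
    (lcmUpto_add_dvd n k)

theorem lcmUpto_le_four_pow (m : ℕ) : lcmUpto m ≤ 4 ^ m := by
  induction m using Nat.strong_induction_on with
  | _ m ih =>
  rcases Nat.lt_or_ge m 2 with hm | hm
  · interval_cases m <;> simp [lcmUpto]
  obtain ⟨t, rfl | rfl⟩ := Nat.even_or_odd' m
  · calc lcmUpto (2 * t) ≤ lcmUpto t * (2 * t).choose t := by
          simpa [two_mul] using lcmUpto_add_le t t
      _ ≤ 4 ^ t * 4 ^ t := Nat.mul_le_mul (ih t (by omega)) (centralBinom_le_four_pow t)
      _ = 4 ^ (2 * t) := by rw [two_mul, pow_add]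
  · calc lcmUpto (2 * t + 1) ≤ lcmUpto (t + 1) * (2 * t + 1).choose t := by
          simpa [show t + 1 + t = 2 * t + 1 by omega] using lcmUpto_add_le (t + 1) t
      _ ≤ 4 ^ (t + 1) * 4 ^ t := Nat.mul_le_mul (ih (t + 1) (by omega)) (choose_middle_le_pow t)
      _ = 4 ^ (2 * t + 1) := by rw [← pow_add]; congr 1; omega

theorem nsmul_lcmUpto_eq_zero {H : Type*} [AddGroup H] [Finite H] {m : ℕ}
    (hcard : Nat.card H ≤ m) (x : H) : lcmUpto m • x = 0 := by
  obtain ⟨t, ht⟩ : Nat.card H ∣ lcmUpto m :=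
    Finset.dvd_lcm (Finset.mem_Icc.2 ⟨Nat.card_pos, hcard⟩)
  rw [ht, mul_comm, mul_nsmul, card_nsmul_eq_zero']

end Nat

theorem stmt_8_general (k : ℕ) (hk : 0 < k) (m : ℕ) :
    ∀ N : ℕ, N = Finset.lcm (Finset.Icc 1 m) id →
      ∀ v : Fin k → ℤ, v = Pi.single (⟨0, hk⟩ : Fin k) (N : ℤ) →
        v ≠ 0 ∧ (∑ i, |v i|) = (N : ℤ) ∧ N ≤ 4 ^ m ∧
        ∀ (H : Type) (_ : AddGroup H) (_ : Finite H),
          Nat.card H ≤ m → ∀ φ : (Fin k → ℤ) →+ H, φ v = 0 := by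
  rintro N rfl v rfl
  refine ⟨?_, ?_, Nat.lcmUpto_le_four_pow m, ?_⟩
  · simp
  · simp [Pi.single_apply, apply_ite]
  · intro H _ _ hcard φ
    rw [← nsmul_one, Pi.single_smul, map_nsmul]
    exact Nat.nsmul_lcmUpto_eq_zero hcard _

/-- For `N = lcm(1,…,m)` the vector `v = N·e₁ ∈ ℤᵏ` is nonzero, has ℓ¹-norm
`N ≤ 4^m`, and is killed by every homomorphism from `ℤᵏ` to a finite group of order
at most `m`.  (The lower bound `F_{ℤᵏ}(n) ≽ log n`.) -/
theorem stmt_8 (k : ℕ) (hk : 0 < k) (m : ℕ) (hm : 0 < m) :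
    ∀ N : ℕ, N = Finset.lcm (Finset.Icc 1 m) id →
      ∀ v : Fin k → ℤ, v = Pi.single (⟨0, hk⟩ : Fin k) (N : ℤ) →
        v ≠ 0 ∧ (∑ i, |v i|) = (N : ℤ) ∧ N ≤ 4 ^ m ∧
        ∀ (H : Type) (_ : AddGroup H) (_ : Finite H),
          Nat.card H ≤ m → ∀ φ : (Fin k → ℤ) →+ H, φ v = 0 :=
  stmt_8_general k hk m
end

section
/- (Hadad, lower bound) For every prime power q, every nontrivial word w ∈ F_k of word length strictly less than (q − 1)/3 fails to be a law in PSL_2(F_q): there exists a group homomorphism φ : F_k → PSL_2(F_q) with φ(w) ≠ 1. In particular the same holds for SL_2(F_q). -/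
open scoped MatrixGroups

/-!
Send the generator `xᵢ` to a matrix `gᵢ ∈ SL₂(F[X])` of degree one in `X` such that the
coefficients of `X` in `gᵢ` and `gᵢ⁻¹` are rank-one matrices `v uᵀ`. For a reduced word of
length `n`, the coefficient of `Xⁿ` in its image is the product of these rank-one matrices:
the first `v` times the last `uᵀ`, scaled by the products `u ⬝ᵥ v'` at the junctions of
consecutive letters. The vectors are built from parameters `p (i, ±) ∈ F`, two for each
generator in the word, so that every junction scalar is a difference of two distinct
parameters; this needs `2n ≤ q`. The lower-left entry of the image of `w` is then a nonzero
polynomial of degree `n < q`, which does not vanish at some `t ∈ F`, and evaluating at `X = t`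
maps `w` to a non-central element of `SL₂(F)`, hence to a nontrivial element of `PSL₂(F)`.
-/

open Polynomial

namespace Matrix

variable {n R : Type*} [Fintype n] [DecidableEq n] [CommRing R]

theorem natDegree_matPolyEquiv_le_iff {M : Matrix n n R[X]} {d : ℕ} :
    (matPolyEquiv M).natDegree ≤ d ↔ ∀ i j, (M i j).natDegree ≤ d := by
  simp only [natDegree_le_iff_coeff_eq_zero]
  constructor
  · intro h i j N hN
    rw [← matPolyEquiv_coeff_apply, h N hN, zero_apply]
  · intro h N hN
    ext i j
    rw [matPolyEquiv_coeff_apply, h i j N hN, zero_apply]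

theorem coeff_matPolyEquiv (M : Matrix n n R[X]) (k : ℕ) :
    (matPolyEquiv M).coeff k = M.map (coeff · k) := by
  ext; simp

theorem natDegree_le_of_mem_map_matPolyEquiv {L : List (Matrix n n R[X])} {d : ℕ}
    (hL : ∀ M ∈ L, ∀ i j, (M i j).natDegree ≤ d) :
    ∀ P ∈ L.map matPolyEquiv, P.natDegree ≤ d :=
  List.forall_mem_map.2 fun M hM => natDegree_matPolyEquiv_le_iff.2 (hL M hM)

theorem natDegree_list_prod_apply_le {L : List (Matrix n n R[X])} {d : ℕ}
    (hL : ∀ M ∈ L, ∀ i j, (M i j).natDegree ≤ d) (i j : n) :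
    (L.prod i j).natDegree ≤ L.length * d := by
  revert i j
  rw [← natDegree_matPolyEquiv_le_iff, map_list_prod]
  refine (natDegree_list_prod_le _).trans ?_
  simpa using List.sum_le_card_nsmul _ d
    (List.forall_mem_map.2 (natDegree_le_of_mem_map_matPolyEquiv hL))

theorem map_coeff_list_prod {L : List (Matrix n n R[X])} {d : ℕ}
    (hL : ∀ M ∈ L, ∀ i j, (M i j).natDegree ≤ d) :
    L.prod.map (coeff · (L.length * d)) = (L.map fun M => M.map (coeff · d)).prod := by
  rw [← coeff_matPolyEquiv, map_list_prod, ← L.length_map matPolyEquiv,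
    coeff_list_prod_of_natDegree_le _ _ (natDegree_le_of_mem_map_matPolyEquiv hL)]
  simp [coeff_matPolyEquiv, Function.comp_def]

theorem exists_list_prod_vecMulVec_eq_smul {α : Type*} [IsDomain R] (v u : α → n → R)
    {x : α} {L : List α} (hL : (x :: L).IsChain fun y z => u y ⬝ᵥ v z ≠ 0) :
    ∃ c : R, c ≠ 0 ∧ ((x :: L).map fun y => vecMulVec (v y) (u y)).prod =
      c • vecMulVec (v x) (u ((x :: L).getLast (List.cons_ne_nil x L))) := by
  induction L generalizing x with
  | nil => exact ⟨1, one_ne_zero, by simp⟩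
  | cons y L ih =>
    obtain ⟨hxy, hL⟩ := List.isChain_cons_cons.mp hL
    obtain ⟨c, hc, hprod⟩ := ih hL
    refine ⟨c * (u x ⬝ᵥ v y), mul_ne_zero hc hxy, ?_⟩
    rw [List.map_cons, List.prod_cons, hprod, List.getLast_cons_cons, mul_smul_comm,
      vecMulVec_mul_vecMulVec, vecMulVec_smul, smul_smul]

theorem SpecialLinearGroup.notMem_center_of_apply_ne_zero {A : SpecialLinearGroup n R} {i j : n}
    (hij : i ≠ j) (hA : A i j ≠ 0) : A ∉ Subgroup.center (SpecialLinearGroup n R) := by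
  intro hc
  rw [← scalar_eq_self_of_mem_center hc i] at hA
  simp [hij] at hA

end Matrix

namespace Hadad

open Matrix (vecMulVec)

variable {F ι : Type*} [Field F] (p : ι × Bool → F)

def outVec : ι × Bool → Fin 2 → F
  | (i, true) => ![p (i, true), 1]
  | (i, false) => ![-p (i, false), -1]

def inVec : ι × Bool → Fin 2 → F
  | (i, true) => ![1, -p (i, false)]
  | (i, false) => ![1, -p (i, true)]

theorem inVec_dotProduct_outVec_ne_zero {S : Set ι} (hp : Set.InjOn p (Prod.fst ⁻¹' S))
    {y z : ι × Bool} (hy : y.1 ∈ S) (hz : z.1 ∈ S) (hyz : y.1 = z.1 → y.2 = z.2) :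
    inVec p y ⬝ᵥ outVec p z ≠ 0 := by
  obtain ⟨i, _ | _⟩ := y <;> obtain ⟨j, _ | _⟩ := z <;>
    simp_all [inVec, outVec, dotProduct, Fin.sum_univ_two, neg_add_eq_zero, add_neg_eq_zero,
      hp.eq_iff, eq_comm (a := j)]

/-- With `a = p (i, true)`, `b = p (i, false)`, `U = !![1, a - b; 0, 1]`, `v = ![a, 1]` and
`u = ![1, -b]`, this is `U * (1 + X • vecMulVec (U⁻¹ *ᵥ v) u)` where `u ⬝ᵥ U⁻¹ *ᵥ v = 0`; hence
it has determinant one, and it and its inverse have rank-one coefficients of `X`. -/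
noncomputable def generator (i : ι) : SL(2, F[X]) :=
  ⟨!![1 + C (p (i, true)) * X,
        C (p (i, true) - p (i, false)) - C (p (i, true) * p (i, false)) * X;
      X, 1 - C (p (i, false)) * X], by simp [Matrix.det_fin_two_of]; ring⟩

noncomputable abbrev letter (x : ι × Bool) : SL(2, F[X]) :=
  cond x.2 (generator p x.1) (generator p x.1)⁻¹

theorem coe_generator (i : ι) : (generator p i : Matrix (Fin 2) (Fin 2) F[X]) =
    !![1 + C (p (i, true)) * X,
        C (p (i, true) - p (i, false)) - C (p (i, true) * p (i, false)) * X;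
      X, 1 - C (p (i, false)) * X] :=
  rfl

theorem coe_letter_false (i : ι) : (letter p (i, false) : Matrix (Fin 2) (Fin 2) F[X]) =
    !![1 - C (p (i, false)) * X,
        C (p (i, false) - p (i, true)) + C (p (i, true) * p (i, false)) * X;
      -X, 1 + C (p (i, true)) * X] := by
  rw [letter, cond_false, Matrix.SpecialLinearGroup.coe_inv, Matrix.adjugate_fin_two,
    coe_generator]
  ext r t : 1
  fin_cases r <;> fin_cases t <;> simp [sub_eq_neg_add]

theorem natDegree_letter_apply_le (x : ι × Bool) (r t : Fin 2) :
    ((letter p x : Matrix (Fin 2) (Fin 2) F[X]) r t).natDegree ≤ 1 := by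
  obtain ⟨i, _ | _⟩ := x
  · rw [coe_letter_false]
    fin_cases r <;> fin_cases t <;> simp <;> compute_degree
  · rw [letter, cond_true, coe_generator]
    fin_cases r <;> fin_cases t <;> simp <;> compute_degree

theorem letter_map_coeff_one (x : ι × Bool) :
    (letter p x : Matrix (Fin 2) (Fin 2) F[X]).map (coeff · 1) =
      vecMulVec (outVec p x) (inVec p x) := by
  obtain ⟨i, _ | _⟩ := x
  · rw [coe_letter_false]
    ext r t
    fin_cases r <;> fin_cases t <;> simp [outVec, inVec, coeff_one, mul_comm (p (i, true))]
  · rw [letter, cond_true, coe_generator]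
    ext r t
    fin_cases r <;> fin_cases t <;> simp [outVec, inVec, coeff_one]

theorem outVec_one_ne_zero (x : ι × Bool) : outVec p x 1 ≠ 0 := by
  obtain ⟨i, _ | _⟩ := x <;> simp [outVec]

theorem inVec_zero (x : ι × Bool) : inVec p x 0 = 1 := by
  obtain ⟨i, _ | _⟩ := x <;> rfl

variable [DecidableEq ι]

theorem coe_lift_generator (w : FreeGroup ι) :
    (FreeGroup.lift (generator p) w : Matrix (Fin 2) (Fin 2) F[X]) =
      (w.toWord.map fun x => (letter p x : Matrix (Fin 2) (Fin 2) F[X])).prod := by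
  conv_lhs => rw [← FreeGroup.mk_toWord (x := w)]
  rw [FreeGroup.lift_mk, ← Matrix.SpecialLinearGroup.coeMonoidHom_apply, map_list_prod,
    List.map_map]
  rfl

theorem natDegree_lift_generator_apply_le (w : FreeGroup ι) (r t : Fin 2) :
    ((FreeGroup.lift (generator p) w : Matrix (Fin 2) (Fin 2) F[X]) r t).natDegree ≤
      w.toWord.length := by
  rw [coe_lift_generator]
  simpa using Matrix.natDegree_list_prod_apply_le (d := 1)
    (List.forall_mem_map.2 fun x _ => natDegree_letter_apply_le p x) r t

theorem coeff_lift_generator_apply_one_zero_ne_zero {S : Set ι}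
    (hp : Set.InjOn p (Prod.fst ⁻¹' S)) {w : FreeGroup ι} (hw : w ≠ 1)
    (hS : ∀ x ∈ w.toWord, x.1 ∈ S) :
    ((FreeGroup.lift (generator p) w : Matrix (Fin 2) (Fin 2) F[X]) 1 0).coeff w.toWord.length ≠
      0 := by
  obtain ⟨x, L, hxL⟩ := List.exists_cons_of_ne_nil (mt FreeGroup.toWord_eq_nil_iff.mp hw)
  have hchain : (x :: L).IsChain fun y z => inVec p y ⬝ᵥ outVec p z ≠ 0 :=
    (hxL ▸ FreeGroup.isReduced_toWord).imp_of_mem_imp fun y z hy hz =>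
      inVec_dotProduct_outVec_ne_zero p hp (hS y (hxL ▸ hy)) (hS z (hxL ▸ hz))
  obtain ⟨c, hc, hprod⟩ := Matrix.exists_list_prod_vecMulVec_eq_smul (outVec p) (inVec p) hchain
  have hlead := Matrix.map_coeff_list_prod
    (L := w.toWord.map fun x => (letter p x : Matrix (Fin 2) (Fin 2) F[X])) (d := 1)
    (List.forall_mem_map.2 fun x _ => natDegree_letter_apply_le p x)
  simp only [List.map_map, Function.comp_def, letter_map_coeff_one, hxL, hprod] at hlead
  have hentry := congrFun (congrFun hlead 1) 0
  simp only [Matrix.map_apply, List.length_map, mul_one] at hentry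
  rw [coe_lift_generator, hxL, hentry, Matrix.smul_apply, Matrix.vecMulVec_apply, inVec_zero,
    mul_one, smul_eq_mul]
  exact mul_ne_zero hc (outVec_one_ne_zero p x)

theorem exists_injOn_preimage_letters [Fintype F] {w : FreeGroup ι}
    (hq : 2 * w.toWord.length ≤ Fintype.card F) :
    ∃ p : ι × Bool → F,
      Set.InjOn p (Prod.fst ⁻¹' ↑(w.toWord.map Prod.fst).toFinset) := by
  set S := (w.toWord.map Prod.fst).toFinset
  have hS : Prod.fst ⁻¹' (S : Set ι) =
      ((S ×ˢ (Finset.univ : Finset Bool) : Finset (ι × Bool)) : Set (ι × Bool)) := by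
    ext; simp
  have hcard : 2 * S.card ≤ Fintype.card F :=
    (Nat.mul_le_mul_left 2 ((List.toFinset_card_le _).trans (w.toWord.length_map _).le)).trans hq
  obtain ⟨p, -, hp⟩ := Set.Finite.exists_injOn_of_encard_le (t := (Set.univ : Set F))
    (hS ▸ Finset.finite_toSet _) (by
      rw [hS, Set.encard_coe_eq_coe_finsetCard, Set.encard_univ, ENat.card_eq_coe_fintype_card,
        Finset.card_product, Finset.card_univ, Fintype.card_bool, mul_comm]
      exact_mod_cast hcard)
  exact ⟨p, hp⟩

theorem exists_monoidHom_notMem_center [Fintype F] {w : FreeGroup ι} (hw : w ≠ 1)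
    (hq : 2 * w.toWord.length ≤ Fintype.card F) :
    ∃ ψ : FreeGroup ι →* SL(2, F), ψ w ∉ Subgroup.center SL(2, F) := by
  obtain ⟨p, hp⟩ := exists_injOn_preimage_letters hq
  set P := (FreeGroup.lift (generator p) w : Matrix (Fin 2) (Fin 2) F[X]) 1 0
  have hlead : P.coeff w.toWord.length ≠ 0 :=
    coeff_lift_generator_apply_one_zero_ne_zero p hp hw
      fun x hx => List.mem_toFinset.2 (List.mem_map_of_mem hx)
  have hlen : w.toWord.length < Fintype.card F := by
    have := List.length_pos_of_ne_nil (FreeGroup.toWord_eq_nil_iff.not.2 hw)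
    omega
  obtain ⟨t, ht⟩ :=
    P.exists_eval_ne_zero_of_natDegree_lt_card (fun h => hlead (h ▸ coeff_zero _))
    (by simpa using (natDegree_lift_generator_apply_le p w 1 0).trans_lt hlen)
  refine ⟨(Matrix.SpecialLinearGroup.map (evalRingHom t)).comp (FreeGroup.lift (generator p)),
    Matrix.SpecialLinearGroup.notMem_center_of_apply_ne_zero (i := 1) (j := 0) (by decide) ?_⟩
  simpa using ht

end Hadad

/-- (Hadad, lower bound) For every finite field `F` of cardinality `q`, every nontrivial
word `w ∈ F_k` of length strictly less than `(q-1)/3` fails to be a law in `PSL₂(F)`,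
and in particular also fails to be a law in `SL₂(F)`. -/
theorem stmt_10 (F : Type) [Field F] [Fintype F] (k : ℕ) (w : FreeGroup (Fin k))
    (hw : w ≠ 1)
    (hlen : ((FreeGroup.toWord w).length : ℝ) < ((Fintype.card F : ℝ) - 1) / 3) :
    (∃ φ : FreeGroup (Fin k) →* Matrix.ProjectiveSpecialLinearGroup (Fin 2) F,
      φ w ≠ 1) ∧
    (∃ ψ : FreeGroup (Fin k) →* Matrix.SpecialLinearGroup (Fin 2) F, ψ w ≠ 1) := by
  have hq : 2 * w.toWord.length ≤ Fintype.card F := by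
    have : ((3 * w.toWord.length + 1 : ℕ) : ℝ) < Fintype.card F := by push_cast; linarith
    have := Nat.cast_lt.1 this
    omega
  obtain ⟨ψ, hψ⟩ := Hadad.exists_monoidHom_notMem_center hw hq
  refine ⟨⟨(QuotientGroup.mk' _).comp ψ, ?_⟩, ⟨ψ, fun h => hψ (h ▸ one_mem _)⟩⟩
  simpa [QuotientGroup.eq_one_iff] using hψ
end

section
/- There exists a constant C > 0 such that for every k ≥ 1, every integer n ≥ 1, and every nontrivial word w ∈ F_k of word length at most n, there exists a finite group H with |H| ≤ C·n³ and a group homomorphism φ : F_k → H with φ(w) ≠ 1. (That is, F_{F_k}(n) ≼ n³; one can take H = PSL_2(F_p) for a prime p with 3n + 1 < p, |H| = (p³ − p)/2.) -/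
/-!
Send the generator `i` to `[[1, 0], [a i • X, 1]] * [[1, a i • X], [0, 1]] ∈ SL₂(K[X])`, with
the `a i` nonzero and pairwise distinct on the letters of `w`. Reading `w` from the right and
applying it to `(1, 1)`, every letter performs two shears by `± a i • X`, which raise the
degrees of the two entries alternately while fixing the ratio of their leading coefficients.
Leading terms could only cancel between consecutive letters of opposite exponents, where the
two ratios add up to `± (a i - a j)`; this vanishes only for `i = j`, i.e. for a cancelling
pair `x x⁻¹`, which a reduced word does not contain. Hence some entry of the image of `(1, 1)`
is a polynomial of degree between `1` and `2 |w|`, and evaluating `X` at a point of `𝔽_p`,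
`p > 2 |w|`, where this polynomial is not `1` gives a map to `SL₂(𝔽_p)` that detects `w`.
Bertrand's postulate gives such a `p ≤ 4 |w|`, and `|SL₂(𝔽_p)| = p (p² - 1) ≤ 64 |w|³`.
-/

open scoped MatrixGroups
open Matrix Polynomial

namespace ResidualFiniteness

section Card

variable (K : Type*) [Field K] [Fintype K]

theorem card_SL_mul_card_sub_one (n : Type*) [Fintype n] [DecidableEq n] [Nonempty n] :
    Nat.card (SpecialLinearGroup n K) * (Fintype.card K - 1) = Nat.card (GL n K) := by
  classical
  have hrange : (SpecialLinearGroup.toGL : SpecialLinearGroup n K →* GL n K).range =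
      (GeneralLinearGroup.det (n := n) (R := K)).ker := by
    ext g
    refine ⟨fun ⟨A, hA⟩ => ?_, fun hg => ⟨⟨g, ?_⟩, Units.ext rfl⟩⟩
    · rw [← hA, MonoidHom.mem_ker, SpecialLinearGroup.coeToGL_det]
    · simpa [Units.ext_iff] using hg
  have hindex : (GeneralLinearGroup.det (n := n) (R := K)).ker.index = Fintype.card K - 1 := by
    rw [Subgroup.index_ker, MonoidHom.range_eq_top.mpr GeneralLinearGroup.det_surjective,
      Subgroup.card_top, Nat.card_eq_fintype_card, Fintype.card_units]
  rw [← hindex, ← Subgroup.card_mul_index (GeneralLinearGroup.det (n := n) (R := K)).ker,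
    ← hrange, ← Nat.card_congr (MonoidHom.ofInjective SpecialLinearGroup.toGL_injective).toEquiv]

theorem card_SL_two : Nat.card SL(2, K) = Fintype.card K * (Fintype.card K ^ 2 - 1) := by
  have hq : 1 < Fintype.card K := Fintype.one_lt_card
  have h := card_SL_mul_card_sub_one K (Fin 2)
  rw [card_GL_field, Fin.prod_univ_two] at h
  refine Nat.eq_of_mul_eq_mul_right (Nat.sub_pos_of_lt hq) (h.trans ?_)
  simp only [Fin.val_zero, Fin.val_one, pow_zero, pow_one]
  rw [sq, ← Nat.mul_sub_one]
  ring

end Card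

section Degree

variable {K : Type*} [Field K]

theorem degree_C_mul_X_mul {c : K} (hc : c ≠ 0) {g : K[X]} {e : ℕ} (hg : g.degree = e) :
    (C c * X * g).degree = ↑(e + 1) := by
  rw [degree_mul, degree_C_mul_X hc, hg, add_comm]; rfl

theorem degree_add_C_mul_X_mul {c : K} (hc : c ≠ 0) {f g : K[X]} {e : ℕ}
    (hf : f.degree ≤ e) (hg : g.degree = e) :
    (f + C c * X * g).degree = ↑(e + 1) ∧
      (f + C c * X * g).leadingCoeff = c * g.leadingCoeff := by
  have hlt : f.degree < (C c * X * g).degree :=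
    degree_C_mul_X_mul hc hg ▸ hf.trans_lt (by exact_mod_cast e.lt_succ_self)
  rw [degree_add_eq_right_of_degree_lt hlt, leadingCoeff_add_of_degree_lt hlt, leadingCoeff_mul,
    leadingCoeff_C_mul_X]
  exact ⟨degree_C_mul_X_mul hc hg, rfl⟩

theorem degree_add_C_mul_X_mul_of_leadingCoeff {c c₀ : K} (hc : c ≠ 0) (hcc : c₀ + c ≠ 0)
    {f g : K[X]} {e : ℕ} (hf : f.degree = ↑(e + 1)) (hg : g.degree = e)
    (hlc : f.leadingCoeff = c₀ * g.leadingCoeff) :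
    (f + C c * X * g).degree = ↑(e + 1) ∧
      (f + C c * X * g).leadingCoeff = (c₀ + c) * g.leadingCoeff := by
  have hg0 : g ≠ 0 := by rintro rfl; simp at hg
  have hlc' : (C c * X * g).leadingCoeff = c * g.leadingCoeff := by
    rw [leadingCoeff_mul, leadingCoeff_C_mul_X]
  have hsum : f.leadingCoeff + (C c * X * g).leadingCoeff = (c₀ + c) * g.leadingCoeff := by
    rw [hlc, hlc', add_mul]
  have hsum0 : f.leadingCoeff + (C c * X * g).leadingCoeff ≠ 0 :=
    hsum ▸ mul_ne_zero hcc (leadingCoeff_ne_zero.mpr hg0)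
  have hdeg : f.degree = (C c * X * g).degree := by rw [hf, degree_C_mul_X_mul hc hg]
  rw [degree_add_eq_of_leadingCoeff_add_ne_zero hsum0, leadingCoeff_add_of_degree_eq hdeg hsum0,
    ← hdeg, hf, max_self]
  exact ⟨rfl, hsum⟩

end Degree

section Shear

def orient {α : Type*} (b : Bool) (v : Fin 2 → α) : α × α :=
  cond b (v 0, v 1) (v 1, v 0)

theorem orient_not {α : Type*} (b : Bool) (v : Fin 2 → α) :
    orient (!b) v = (orient b v).swap := by
  cases b <;> rfl

variable {R : Type*} [CommRing R]

def shear (c : R) (p : R × R) : R × R :=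
  (p.1 + c * p.2, p.2 + c * (p.1 + c * p.2))

/-- `!![1, 0; c, 1] * !![1, c; 0, 1]`. Its inverse is conjugate to `shearSL (-c)` by the
coordinate swap, which is why `orient` reverses the entries for negative letters. -/
def shearSL (c : R) : SL(2, R) :=
  ⟨!![1, c; c, c * c + 1], by rw [det_fin_two_of]; ring⟩

theorem orient_mulVec (c : R) (b : Bool) (v : Fin 2 → R) :
    orient b ((cond b (shearSL c) (shearSL c)⁻¹ : SL(2, R)) *ᵥ v) =
      shear (cond b c (-c)) (orient b v) := by
  have hmat : (shearSL c : Matrix (Fin 2) (Fin 2) R) = !![1, c; c, c * c + 1] := rfl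
  cases b
  · simp [orient, shear, hmat, adjugate_fin_two_of, mulVec, dotProduct, Fin.sum_univ_two]
    constructor <;> ring
  · simp [orient, shear, hmat, mulVec, dotProduct, Fin.sum_univ_two]
    ring

end Shear

section Leading

variable {K : Type*} [Field K]

def IsLeading (c : K) (d : ℕ) (p : K[X] × K[X]) : Prop :=
  p.1.degree = d ∧ p.2.degree = ↑(d + 1) ∧ p.2.leadingCoeff = c * p.1.leadingCoeff

theorem isLeading_shear {c : K} (hc : c ≠ 0) {p : K[X] × K[X]} {e : ℕ}
    (h1 : p.1.degree ≤ e) (h2 : p.2.degree = e) : IsLeading c (e + 1) (shear (C c * X) p) := by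
  obtain ⟨hdeg, -⟩ := degree_add_C_mul_X_mul hc h1 h2
  obtain ⟨hdeg', hlc'⟩ :=
    degree_add_C_mul_X_mul hc (h2.le.trans (by exact_mod_cast e.le_succ)) hdeg
  exact ⟨hdeg, hdeg', hlc'⟩

theorem isLeading_shear_swap {c c₀ : K} (hc : c ≠ 0) (hcc : c₀ + c ≠ 0) {p : K[X] × K[X]}
    {d : ℕ} (h : IsLeading c₀ d p) : IsLeading c (d + 1) (shear (C c * X) p.swap) := by
  obtain ⟨h1, h2, hlc⟩ := h
  obtain ⟨hdeg, -⟩ := degree_add_C_mul_X_mul_of_leadingCoeff hc hcc h2 h1 hlc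
  obtain ⟨hdeg', hlc'⟩ :=
    degree_add_C_mul_X_mul hc (h1.le.trans (by exact_mod_cast d.le_succ)) hdeg
  exact ⟨hdeg, hdeg', hlc'⟩

end Leading

noncomputable section Words

variable {ι K : Type*} [Field K]

def shearRep (a : ι → K) : FreeGroup ι →* SL(2, K[X]) :=
  FreeGroup.lift fun i => shearSL (C (a i) * X)

def wordVec (a : ι → K) (L : List (ι × Bool)) : Fin 2 → K[X] :=
  (shearRep a (FreeGroup.mk L) : Matrix (Fin 2) (Fin 2) K[X]) *ᵥ ![1, 1]

def letterCoeff (a : ι → K) (x : ι × Bool) : K :=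
  cond x.2 (a x.1) (-a x.1)

theorem letterCoeff_ne_zero (a : ι → K) {x : ι × Bool} (h : a x.1 ≠ 0) :
    letterCoeff a x ≠ 0 := by
  obtain ⟨i, _ | _⟩ := x <;> simpa [letterCoeff] using h

theorem letterCoeff_add_ne_zero (a : ι → K) {x y : ι × Bool} (hb : y.2 ≠ x.2)
    (ha : a y.1 ≠ a x.1) : letterCoeff a y + letterCoeff a x ≠ 0 := by
  obtain ⟨i, _ | _⟩ := x <;> obtain ⟨j, _ | _⟩ := y <;>
    simp_all [letterCoeff, add_eq_zero_iff_eq_neg, eq_comm]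

theorem orient_wordVec_cons (a : ι → K) (x : ι × Bool) (L : List (ι × Bool)) :
    orient x.2 (wordVec a (x :: L)) =
      shear (C (letterCoeff a x) * X) (orient x.2 (wordVec a L)) := by
  have hcoeff : cond x.2 (C (a x.1) * X) (-(C (a x.1) * X)) = C (letterCoeff a x) * X := by
    obtain ⟨i, _ | _⟩ := x <;> simp [letterCoeff]
  rw [← hcoeff, ← orient_mulVec, wordVec, wordVec, shearRep, FreeGroup.lift_mk,
    FreeGroup.lift_mk, List.map_cons, List.prod_cons]
  simp only [mulVec_mulVec]
  rfl

theorem exists_isLeading_wordVec (a : ι → K) (x : ι × Bool) (L : List (ι × Bool))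
    (hchain : (x :: L).IsChain fun y z => y.2 ≠ z.2 → a y.1 ≠ a z.1)
    (h0 : ∀ y ∈ x :: L, a y.1 ≠ 0) :
    ∃ d, d + 1 ≤ 2 * (L.length + 1) ∧
      IsLeading (letterCoeff a x) d (orient x.2 (wordVec a (x :: L))) := by
  have hx : letterCoeff a x ≠ 0 := letterCoeff_ne_zero a (h0 x List.mem_cons_self)
  rw [orient_wordVec_cons]
  induction L generalizing x with
  | nil =>
    have hone : orient x.2 (wordVec a []) = (1, 1) := by
      cases x.2 <;> simp [orient, wordVec, ← FreeGroup.one_eq_mk]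
    rw [hone]
    exact ⟨1, le_rfl, isLeading_shear hx degree_one.le degree_one⟩
  | cons y L ih =>
    obtain ⟨hxy, hchain⟩ := List.isChain_cons_cons.mp hchain
    have hy0 : ∀ z ∈ y :: L, a z.1 ≠ 0 := fun z hz => h0 z (List.mem_cons_of_mem _ hz)
    obtain ⟨d, hd, hlead⟩ :=
      ih y hchain hy0 (letterCoeff_ne_zero a (hy0 y List.mem_cons_self))
    rw [← orient_wordVec_cons] at hlead
    simp only [List.length_cons] at hd ⊢
    by_cases hb : y.2 = x.2
    · rw [← hb]
      exact ⟨d + 2, by omega,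
        isLeading_shear hx (hlead.1.le.trans (by exact_mod_cast d.le_succ)) hlead.2.1⟩
    · rw [Bool.eq_not_of_ne (Ne.symm hb), orient_not]
      exact ⟨d + 1, by omega,
        isLeading_shear_swap hx (letterCoeff_add_ne_zero a hb (hxy (Ne.symm hb)).symm) hlead⟩

theorem exists_natDegree_wordVec (a : ι → K) {L : List (ι × Bool)} (hL : L ≠ [])
    (hchain : L.IsChain fun y z => y.2 ≠ z.2 → a y.1 ≠ a z.1) (h0 : ∀ y ∈ L, a y.1 ≠ 0) :
    ∃ i, 0 < (wordVec a L i).natDegree ∧ (wordVec a L i).natDegree ≤ 2 * L.length := by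
  obtain ⟨x, L, rfl⟩ := List.exists_cons_of_ne_nil hL
  obtain ⟨d, hd, -, hdeg, -⟩ := exists_isLeading_wordVec a x L hchain h0
  have hsnd : (orient x.2 (wordVec a (x :: L))).2 = wordVec a (x :: L) (cond x.2 1 0) := by
    cases x.2 <;> rfl
  rw [hsnd] at hdeg
  refine ⟨cond x.2 1 0, ?_⟩
  rw [natDegree_eq_of_degree_eq_some hdeg]
  exact ⟨d.succ_pos, hd⟩

end Words

theorem exists_eval_ne_one {K : Type*} [Field K] [Fintype K] {P : K[X]}
    (h0 : 0 < P.natDegree) (hK : P.natDegree < Fintype.card K) : ∃ t, P.eval t ≠ 1 := by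
  have hdeg : (P - 1).natDegree = P.natDegree := by rw [← C_1, natDegree_sub_C]
  have hne : P - 1 ≠ 0 := fun h => by rw [h, natDegree_zero] at hdeg; omega
  obtain ⟨t, ht⟩ := (P - 1).exists_eval_ne_zero_of_natDegree_lt_card hne
    (by rw [hdeg, Cardinal.mk_fintype]; exact_mod_cast hK)
  exact ⟨t, fun h1 => ht (by rw [eval_sub, h1, eval_one, sub_self])⟩

theorem exists_injOn_ne_zero {ι K : Type*} [Field K] [Fintype K] (s : Finset ι)
    (hs : s.card < Fintype.card K) : ∃ a : ι → K, Set.InjOn a s ∧ ∀ i ∈ s, a i ≠ 0 := by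
  classical
  obtain ⟨f, hf⟩ := Function.Embedding.exists_of_card_le_finset (α := s)
    (s := Finset.univ.erase (0 : K)) (by
      rw [Fintype.card_coe, Finset.card_erase_of_mem (Finset.mem_univ _), Finset.card_univ]
      omega)
  refine ⟨fun i => if h : i ∈ s then f ⟨i, h⟩ else 0, fun i hi j hj hij => ?_,
    fun i hi => ?_⟩
  · simp only [Finset.mem_coe] at hi hj
    simp only [dif_pos hi, dif_pos hj] at hij
    exact congrArg Subtype.val (f.injective hij)
  · simpa [dif_pos hi] using hf ⟨⟨i, hi⟩, rfl⟩

theorem exists_SL_two_apply_ne_one {ι K : Type*} [Field K] [Fintype K] [DecidableEq ι]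
    (w : FreeGroup ι) (hw : w ≠ 1) (hK : 2 * w.toWord.length < Fintype.card K) :
    ∃ φ : FreeGroup ι →* SL(2, K), φ w ≠ 1 := by
  have hletters : ∀ y ∈ w.toWord, y.1 ∈ (w.toWord.map Prod.fst).toFinset := fun y hy =>
    List.mem_toFinset.mpr (List.mem_map_of_mem hy)
  obtain ⟨a, hinj, h0⟩ := exists_injOn_ne_zero (K := K) (w.toWord.map Prod.fst).toFinset
    (by have := (w.toWord.map Prod.fst).toFinset_card_le; rw [List.length_map] at this; omega)
  have hchain : w.toWord.IsChain fun y z => y.2 ≠ z.2 → a y.1 ≠ a z.1 :=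
    FreeGroup.isReduced_toWord.imp_of_mem_imp fun y z hy hz hred hb ha =>
      hb (hred (hinj (hletters y hy) (hletters z hz) ha))
  obtain ⟨i, hpos, hle⟩ := exists_natDegree_wordVec a (mt FreeGroup.toWord_eq_nil_iff.mp hw)
    hchain fun y hy => h0 _ (hletters y hy)
  obtain ⟨t, ht⟩ := exists_eval_ne_one hpos (by omega)
  refine ⟨(SpecialLinearGroup.map (evalRingHom t)).comp (shearRep a), fun h1 => ht ?_⟩
  rw [MonoidHom.comp_apply, ← FreeGroup.mk_toWord (x := w)] at h1
  have hmap : (shearRep a (FreeGroup.mk w.toWord) : Matrix (Fin 2) (Fin 2) K[X]).map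
      (evalRingHom t) = 1 := by
    rw [← RingHom.mapMatrix_apply, ← SpecialLinearGroup.map_apply_coe, h1]
    rfl
  rw [wordVec, ← coe_evalRingHom, RingHom.map_mulVec, hmap, one_mulVec]
  fin_cases i <;> simp

end ResidualFiniteness

/-- There is a constant `C > 0` such that every nontrivial word of length at most `n`
in a free group of finite rank is detected by a finite group of order at most `C·n³`.
(The upper bound `F_{F_k}(n) ≼ n³`.) -/
theorem stmt_11 :
    ∃ C : ℝ, 0 < C ∧
      ∀ k : ℕ, 1 ≤ k → ∀ n : ℕ, 1 ≤ n →
        ∀ w : FreeGroup (Fin k), w ≠ 1 → (FreeGroup.toWord w).length ≤ n →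
          ∃ (H : Type) (_ : Group H) (_ : Finite H),
            (Nat.card H : ℝ) ≤ C * (n : ℝ) ^ 3 ∧
            ∃ φ : FreeGroup (Fin k) →* H, φ w ≠ 1 := by
  refine ⟨64, by norm_num, fun k _ n hn w hw hlen => ?_⟩
  obtain ⟨p, hp, hnp, hp4⟩ := Nat.exists_prime_lt_and_le_two_mul (2 * n) (by omega)
  have : Fact p.Prime := ⟨hp⟩
  obtain ⟨φ, hφ⟩ := ResidualFiniteness.exists_SL_two_apply_ne_one (K := ZMod p) w hw
    (by rw [ZMod.card]; omega)
  refine ⟨SL(2, ZMod p), inferInstance, inferInstance, ?_, φ, hφ⟩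
  have hcard : Nat.card SL(2, ZMod p) ≤ (4 * n) ^ 3 := calc
    Nat.card SL(2, ZMod p) = p * (p ^ 2 - 1) := by
      rw [ResidualFiniteness.card_SL_two, ZMod.card]
    _ ≤ p * p ^ 2 := Nat.mul_le_mul_left _ (Nat.sub_le _ _)
    _ = p ^ 3 := by ring
    _ ≤ (4 * n) ^ 3 := Nat.pow_le_pow_left (by omega) 3
  calc (Nat.card SL(2, ZMod p) : ℝ) ≤ ((4 * n : ℕ) : ℝ) ^ 3 := by exact_mod_cast hcard
    _ = 64 * (n : ℝ) ^ 3 := by push_cast; ring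
end

section
/- For all sufficiently large n there exists a nontrivial word w ∈ F_k of word length at most e^{4k(log n)²}·log n such that for every finite group H with |H| ≤ n and every group homomorphism φ : F_k → H one has φ(w) = 1. (Consequently F_{F_k}(n) ≽ e^{√(log n)}.) -/
/-!
Let `x, y` be two distinct generators. For `2 ^ m ≥ n` take the balanced tree of depth `m` whose
leaves are `x y^d x⁻¹` for `1 ≤ d ≤ 2 ^ m`, combined by `(a, b) ↦ x ⁅a, y b y⁻¹⁆ x⁻¹`. A
commutator dies as soon as one of its entries dies, and in a group of order at most `n` the image
of `y` has some order `d ≤ 2 ^ m`, which kills the leaf `x y^d x⁻¹`. Every node has a reduced word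
beginning with `x` and ending with `x⁻¹`, and these letters never cancel against the `y^{±1}` put
next to them, so the tree is a nontrivial word; its length is `O(8 ^ m) = O(n ^ 3)`.
-/

open scoped commutatorElement

namespace FreeGroup

variable {α : Type*}

section

variable [DecidableEq α]

def HasEnds (x : FreeGroup α) (p q : α × Bool) : Prop :=
  x.toWord.head? = some p ∧ x.toWord.getLast? = some q

theorem hasEnds_of_pow (a : α) (n : ℕ) :
    (of a ^ (n + 1)).HasEnds (a, true) (a, true) := by
  simp [HasEnds, toWord_of_pow, List.head?_replicate, List.getLast?_replicate]

theorem hasEnds_of (a : α) : (of a).HasEnds (a, true) (a, true) := by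
  simpa using hasEnds_of_pow a 0

namespace HasEnds

variable {x y : FreeGroup α} {p q p' q' : α × Bool}

theorem ne_one (h : x.HasEnds p q) : x ≠ 1 := by
  rintro rfl
  simpa using h.1

theorem inv {a b : α} {s t : Bool} (h : x.HasEnds (a, s) (b, t)) :
    x⁻¹.HasEnds (b, !t) (a, !s) := by
  obtain ⟨hp, hq⟩ := h
  simp [HasEnds, toWord_inv, invRev, List.head?_reverse, List.getLast?_reverse, hp, hq]

theorem mul (hx : x.HasEnds p q) (hy : y.HasEnds p' q') (hqp : q.1 = p'.1 → q.2 = p'.2) :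
    (x * y).HasEnds p q' := by
  obtain ⟨hp, hq⟩ := hx
  obtain ⟨hp', hq'⟩ := hy
  have hred : IsReduced (x.toWord ++ y.toWord) := by
    refine List.isChain_append.mpr ⟨isReduced_toWord, isReduced_toWord, ?_⟩
    rintro a ha b hb
    rw [hq, Option.mem_some_iff] at ha
    rw [hp', Option.mem_some_iff] at hb
    exact ha ▸ hb ▸ hqp
  rw [HasEnds, toWord_mul, hred.reduce_eq]
  exact ⟨by simp [List.head?_append, hp], by simp [List.getLast?_append, hq']⟩

end HasEnds

end

def conjCommutator (x y : α) (a b : FreeGroup α) : FreeGroup α :=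
  of x * ⁅a, of y * b * (of y)⁻¹⁆ * (of x)⁻¹

section conjCommutator

variable {x y : α} {a b : FreeGroup α}

theorem map_conjCommutator_eq_one_of_left {G : Type*} [Group G] (φ : FreeGroup α →* G)
    (h : φ a = 1) : φ (conjCommutator x y a b) = 1 := by
  simp [conjCommutator, commutatorElement_def, h]

theorem map_conjCommutator_eq_one_of_right {G : Type*} [Group G] (φ : FreeGroup α →* G)
    (h : φ b = 1) : φ (conjCommutator x y a b) = 1 := by
  simp [conjCommutator, commutatorElement_def, h]

variable [DecidableEq α]

theorem norm_conjCommutator_le (x y : α) (a b : FreeGroup α) :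
    norm (conjCommutator x y a b) ≤ 2 * norm a + 2 * norm b + 6 := by
  have hconj (c : FreeGroup α) : norm (of y * c * (of y)⁻¹) ≤ norm c + 2 := by
    grw [norm_mul_le, norm_mul_le, norm_inv_eq, norm_of]
    omega
  rw [conjCommutator, commutatorElement_def]
  grw [norm_mul_le, norm_mul_le, norm_mul_le, norm_mul_le, norm_mul_le, norm_inv_eq,
    norm_inv_eq, norm_inv_eq, norm_of, hconj]
  omega

theorem HasEnds.conjCommutator (hxy : x ≠ y) (ha : a.HasEnds (x, true) (x, false))
    (hb : b.HasEnds (x, true) (x, false)) :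
    (conjCommutator x y a b).HasEnds (x, true) (x, false) := by
  have hc : (of y * b * (of y)⁻¹).HasEnds (y, true) (y, false) :=
    ((hasEnds_of y).mul hb fun _ ↦ rfl).mul (hasEnds_of y).inv fun _ ↦ rfl
  have hcomm : ⁅a, of y * b * (of y)⁻¹⁆.HasEnds (x, true) (y, false) := by
    rw [commutatorElement_def]
    exact ((ha.mul hc fun h ↦ absurd h hxy).mul ha.inv fun h ↦ absurd h hxy.symm).mul hc.inv
      fun h ↦ absurd h hxy
  exact ((hasEnds_of x).mul hcomm fun _ ↦ rfl).mul (hasEnds_of x).inv fun _ ↦ rfl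

end conjCommutator

/-- The leaves are `f 0, …, f (2 ^ m - 1)`. -/
def commutatorTree (x y : α) : ℕ → (ℕ → FreeGroup α) → FreeGroup α
  | 0, f => f 0
  | m + 1, f => conjCommutator x y (commutatorTree x y m f)
      (commutatorTree x y m fun t ↦ f (2 ^ m + t))

section commutatorTree

variable {x y : α}

theorem map_commutatorTree_eq_one {G : Type*} [Group G] (φ : FreeGroup α →* G) :
    ∀ (m : ℕ) {f : ℕ → FreeGroup α} {t : ℕ}, t < 2 ^ m → φ (f t) = 1 →
      φ (commutatorTree x y m f) = 1
  | 0, f, t, ht, h => by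
    obtain rfl : t = 0 := by simpa using ht
    exact h
  | m + 1, f, t, ht, h => by
    rcases lt_or_ge t (2 ^ m) with ht' | ht'
    · exact map_conjCommutator_eq_one_of_left φ (map_commutatorTree_eq_one φ m ht' h)
    · refine map_conjCommutator_eq_one_of_right φ
        (map_commutatorTree_eq_one φ m (t := t - 2 ^ m) (by rw [pow_succ] at ht; omega) ?_)
      rwa [Nat.add_sub_cancel' ht']

variable [DecidableEq α]

theorem HasEnds.commutatorTree (hxy : x ≠ y) :
    ∀ (m : ℕ) {f : ℕ → FreeGroup α}, (∀ t, (f t).HasEnds (x, true) (x, false)) →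
      (commutatorTree x y m f).HasEnds (x, true) (x, false)
  | 0, _, hf => hf 0
  | m + 1, _, hf =>
    .conjCommutator hxy (commutatorTree hxy m hf) (commutatorTree hxy m fun _ ↦ hf _)

theorem norm_commutatorTree_add_two_le :
    ∀ (m : ℕ) {f : ℕ → FreeGroup α} {c : ℕ}, (∀ t < 2 ^ m, norm (f t) ≤ c) →
      norm (commutatorTree x y m f) + 2 ≤ 4 ^ m * (c + 2)
  | 0, f, c, hf => by simpa [commutatorTree] using hf 0 one_pos
  | m + 1, f, c, hf => by
    have hA := norm_commutatorTree_add_two_le m (f := f) fun t ht ↦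
      hf t (ht.trans_le (Nat.pow_le_pow_right two_pos m.le_succ))
    have hB := norm_commutatorTree_add_two_le m (f := fun t ↦ f (2 ^ m + t)) fun t ht ↦
      hf _ (by rw [pow_succ]; omega)
    have := norm_conjCommutator_le x y (commutatorTree x y m f)
      (commutatorTree x y m fun t ↦ f (2 ^ m + t))
    rw [commutatorTree, pow_succ']
    linarith

end commutatorTree

def smallGroupLaw (x y : α) (m : ℕ) : FreeGroup α :=
  commutatorTree x y m fun t ↦ of x * of y ^ (t + 1) * (of x)⁻¹

section smallGroupLaw

variable {x y : α}

theorem map_smallGroupLaw_eq_one {G : Type*} [Group G] [Finite G] (φ : FreeGroup α →* G)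
    {m : ℕ} (hG : Nat.card G ≤ 2 ^ m) : φ (smallGroupLaw x y m) = 1 := by
  have hd := orderOf_pos (φ (of y))
  refine map_commutatorTree_eq_one φ m (t := orderOf (φ (of y)) - 1)
    ((Nat.sub_lt hd one_pos).trans_le (orderOf_le_card.trans hG)) ?_
  have hpow : φ (of y) ^ (orderOf (φ (of y)) - 1 + 1) = 1 := by
    rw [Nat.sub_add_cancel hd, pow_orderOf_eq_one]
  simp [hpow]

variable [DecidableEq α]

theorem smallGroupLaw_ne_one (hxy : x ≠ y) (m : ℕ) : smallGroupLaw x y m ≠ 1 :=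
  (HasEnds.commutatorTree hxy m fun t ↦
    ((hasEnds_of x).mul (hasEnds_of_pow y t) fun _ ↦ rfl).mul (hasEnds_of x).inv
      fun h ↦ absurd h hxy.symm).ne_one

theorem norm_smallGroupLaw_add_two_le (x y : α) (m : ℕ) :
    norm (smallGroupLaw x y m) + 2 ≤ 4 ^ m * (2 ^ m + 4) :=
  norm_commutatorTree_add_two_le m fun t ht ↦ by
    grw [norm_mul_le, norm_mul_le, norm_inv_eq, norm_of, norm_of_pow]
    omega

end smallGroupLaw

end FreeGroup

theorem Real.pow_four_le_exp_mul_log {k : ℝ} (hk : 1 ≤ k) {x : ℝ} (hx : Real.exp 1 ≤ x) :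
    x ^ 4 ≤ Real.exp (4 * k * Real.log x ^ 2) * Real.log x := by
  have hx0 : 0 < x := (Real.exp_pos 1).trans_le hx
  have hlog : 1 ≤ Real.log x := (Real.le_log_iff_exp_le hx0).mpr hx
  calc x ^ 4 = Real.exp (4 * Real.log x) := by
        rw [← Real.exp_log (pow_pos hx0 4), Real.log_pow]
        norm_num
    _ ≤ Real.exp (4 * k * Real.log x ^ 2) := Real.exp_le_exp.mpr (by nlinarith)
    _ ≤ Real.exp (4 * k * Real.log x ^ 2) * Real.log x :=
      le_mul_of_one_le_right (by positivity) hlog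

/-- For all sufficiently large `n` there is a nontrivial word `w` in the free group on
`k ≥ 2` generators, of word length at most `e^{4k(log n)²}·log n`, which is killed by
every homomorphism to a finite group of order at most `n`.
(Consequently `F_{F_k}(n) ≽ e^{√(log n)}`.) -/
theorem stmt_12 (k : ℕ) (hk : 2 ≤ k) :
    ∃ N : ℕ, ∀ n : ℕ, N ≤ n →
      ∃ w : FreeGroup (Fin k), w ≠ 1 ∧
        ((FreeGroup.toWord w).length : ℝ) ≤
          Real.exp (4 * k * (Real.log n) ^ 2) * Real.log n ∧
        ∀ (H : Type) (_ : Group H) (_ : Finite H),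
          Nat.card H ≤ n → ∀ φ : FreeGroup (Fin k) →* H, φ w = 1 := by
  refine ⟨16, fun n hn ↦ ?_⟩
  set m := Nat.log 2 n + 1
  have hnm : n ≤ 2 ^ m := (Nat.lt_pow_succ_log_self one_lt_two n).le
  have hmn : 2 ^ m ≤ 2 * n := by
    rw [pow_succ, mul_comm]
    exact Nat.mul_le_mul_left 2 (Nat.pow_log_le_self 2 (by omega))
  let x : Fin k := ⟨0, by omega⟩
  let y : Fin k := ⟨1, hk⟩
  have hlen : FreeGroup.norm (FreeGroup.smallGroupLaw x y m) ≤ n ^ 4 := by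
    have h₁ := FreeGroup.norm_smallGroupLaw_add_two_le x y m
    have h₂ : 4 ^ m * (2 ^ m + 4) ≤ (2 * n) * (2 * n) * (2 * n + 4) := by
      rw [show 4 ^ m = 2 ^ m * 2 ^ m by rw [← mul_pow]; rfl]
      gcongr
    have h₃ : (2 * n) * (2 * n) * (2 * n + 4) ≤ n ^ 4 := by nlinarith
    omega
  refine ⟨FreeGroup.smallGroupLaw x y m,
    FreeGroup.smallGroupLaw_ne_one (by simp [x, y, Fin.ext_iff]) m, ?_,
    fun H _ _ hH φ ↦ FreeGroup.map_smallGroupLaw_eq_one φ (hH.trans hnm)⟩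
  calc ((FreeGroup.toWord _).length : ℝ) ≤ (n : ℝ) ^ 4 := by exact_mod_cast hlen
    _ ≤ _ := Real.pow_four_le_exp_mul_log (by exact_mod_cast (by omega : 1 ≤ k))
      (Real.exp_one_lt_three.le.trans (by exact_mod_cast (by omega : 3 ≤ n)))
end
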